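/- There exists a universal constant c > 0 such that the following holds for any δ ∈ (0,1), number of epochs M ≥ 1, epoch length K ≥ 1, and B > 0. If ‖θ̄ − θ*‖_∞ ≤ B, then the auxiliary process path'₁ = 0, path'_{t+1} = (1−λ_t)·path'_t + λ_t·V'_t, where V'_t = (T(θ̄) − T(θ*)) − (T̂_t(θ̄) − T̂_t(θ*)) and λ_t = 1/(1+(1−γ)t), satisfies (2·Σ_{ℓ=1}^{K} ‖path'_ℓ‖_∞)/(1+(1−γ)K) + ‖path'_{K+1}‖_∞ ≤ (c·B/(1−γ))·√(2·log(8MDK/δ)/(1+(1−γ)K)) with probability at least 1 − δ/(3M). -/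

import Mathlib

open MeasureTheory ProbabilityTheory Finset

namespace VRQ

variable {S A : Type} [Fintype S] [Fintype A] [Nonempty S] [Nonempty A]

/-- A finite Markov decision process: transition probabilities and rewards. -/
structure MDP (S A : Type) [Fintype S] [Fintype A] where
  P : S → A → S → ℝ
  P_nonneg : ∀ s a s', 0 ≤ P s a s'
  P_sum_one : ∀ s a, ∑ s', P s a s' = 1
  r : S → A → ℝ

/-- `vmax θ s = max_{a} θ s a`. -/
noncomputable def vmax (θ : S → A → ℝ) (s : S) : ℝ :=
  (Finset.univ : Finset A).sup' Finset.univ_nonempty (θ s)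

/-- Sup-norm over state-action pairs. -/
noncomputable def supNorm (θ : S → A → ℝ) : ℝ :=
  (Finset.univ : Finset (S × A)).sup' Finset.univ_nonempty fun p => |θ p.1 p.2|

/-- The population Bellman operator. -/
noncomputable def bellman (M : MDP S A) (γ : ℝ) (θ : S → A → ℝ) : S → A → ℝ :=
  fun s a => M.r s a + γ * ∑ s', M.P s a s' * vmax θ s'

/-- The empirical Bellman operator built from the sample `X`. -/
noncomputable def empBellman (M : MDP S A) (γ : ℝ) (X : S → A → S) (θ : S → A → ℝ) :
    S → A → ℝ :=
  fun s a => M.r s a + γ * vmax θ (X s a)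

/-- The entrywise standard deviation `σ(θ)(s,a)` of the empirical Bellman operator at `θ`. -/
noncomputable def bellStd (M : MDP S A) (γ : ℝ) (θ : S → A → ℝ) : S → A → ℝ :=
  fun s a => Real.sqrt (γ ^ 2 *
    (∑ s', M.P s a s' * (vmax θ s') ^ 2 - (∑ s', M.P s a s' * vmax θ s') ^ 2))

/-- Monte Carlo approximation `T̃_N` of the Bellman operator from `N` samples. -/
noncomputable def mcBellman (M : MDP S A) (γ : ℝ) (N : ℕ) (Y : ℕ → S → A → S)
    (θ : S → A → ℝ) : S → A → ℝ :=
  fun s a => (N : ℝ)⁻¹ * ∑ i ∈ Finset.range N, empBellman M γ (Y i) θ s a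

/-- Stepsize `λ_k = 1/(1+(1-γ)k)`. -/
noncomputable def stepSize (γ : ℝ) (k : ℕ) : ℝ := 1 / (1 + (1 - γ) * k)

/-- Variance-reduced `Q`-learning iterates within one epoch: `vrIter ... t = θ_{t+1}`,
with `θ₁ = θbar` and `θ_{t+1} = (1-λ_t) θ_t + λ_t (T̂_t(θ_t) - T̂_t(θbar) + rec)`. -/
noncomputable def vrIter (M : MDP S A) (γ : ℝ) (θbar rec : S → A → ℝ)
    (X : ℕ → S → A → S) : ℕ → S → A → ℝ
  | 0 => θbar
  | t + 1 => fun s a =>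
      (1 - stepSize γ (t + 1)) * vrIter M γ θbar rec X t s a +
        stepSize γ (t + 1) *
          (empBellman M γ (X (t + 1)) (vrIter M γ θbar rec X t) s a -
            empBellman M γ (X (t + 1)) θbar s a + rec s a)

/-- One epoch of variance-reduced `Q`-learning. -/
noncomputable def runEpoch (M : MDP S A) (γ : ℝ) (K N : ℕ)
    (X Y : ℕ → S → A → S) (θbar : S → A → ℝ) : S → A → ℝ :=
  vrIter M γ θbar (mcBellman M γ N Y θbar) X K

/-- The full variance-reduced `Q`-learning algorithm: `vrQLearn ... m = θ̄_m`. -/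
noncomputable def vrQLearn (M : MDP S A) (γ : ℝ) (K : ℕ) (Nm : ℕ → ℕ)
    (X Y : ℕ → ℕ → S → A → S) (θ0 : S → A → ℝ) : ℕ → S → A → ℝ
  | 0 => θ0
  | m + 1 => runEpoch M γ K (Nm (m + 1)) (X (m + 1)) (Y (m + 1))
      (vrQLearn M γ K Nm X Y θ0 m)

/-- Auxiliary noise process: `path₁ = 0`, `path_{t+1} = (1-λ_t) path_t + λ_t W_t`. -/
noncomputable def auxPath (γ : ℝ) (W : ℕ → S → A → ℝ) : ℕ → S → A → ℝ
  | 0 => fun _ _ => 0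
  | t + 1 =>
      if t = 0 then fun _ _ => 0
      else fun s a => (1 - stepSize γ t) * auxPath γ W t s a + stepSize γ t * W t s a

/-- `X : Ω → S → A → S` is a generative-model sample: each coordinate `X ω s a`
is distributed according to `P(· | s,a)`. -/
def IsSample {Ω : Type} [MeasurableSpace Ω] [MeasurableSpace S] (μ : Measure Ω)
    (M : MDP S A) (X : Ω → S → A → S) : Prop :=
  (∀ s a, Measurable fun ω => X ω s a) ∧
    ∀ s a s', μ {ω | X ω s a = s'} = ENNReal.ofReal (M.P s a s')

/-- Policy transition operator `P^π`. -/
noncomputable def polOp (M : MDP S A) (π : S → A) (u : S → A → ℝ) : S → A → ℝ :=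
  fun s a => ∑ s', M.P s a s' * u s' (π s')

/-- The resolvent `(I - γ P^π)⁻¹ = Σ_{k≥0} γ^k (P^π)^k`. -/
noncomputable def resolvent (M : MDP S A) (γ : ℝ) (π : S → A) (u : S → A → ℝ) :
    S → A → ℝ :=
  fun s a => ∑' k : ℕ, γ ^ k * (polOp M π)^[k] u s a

end VRQ

/-!
Unrolling the recursion, `path'_{ℓ+1}(s,a) = Σ_{j ≤ ℓ} w_{ℓ,j} V'_j(s,a)` with nonnegative
weights satisfying `Σ_j w_{ℓ,j}² ≤ λ_ℓ`. For fixed `(s,a)` the terms `V'_j(s,a)` are independent,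
centred and bounded by `2B`, so Hoeffding's inequality gives `|path'_{ℓ+1}(s,a)| < 2B √(2 L λ_ℓ)`
outside an event of probability `2 e^{-L}`, where `L = log (8 M D K / δ)`. A union bound over the
`K D` pairs `(ℓ, (s,a))` costs `δ / (4M)`, and on the good event
`Σ_{ℓ < K} √λ_ℓ ≤ 3 √(1 + (1-γ)K) / (1-γ)` turns these bounds into the claim with `c = 14`.
-/

open Real
open scoped NNReal

namespace ProbabilityTheory

variable {Ω : Type*} [MeasurableSpace Ω] {μ : Measure Ω} {X : Ω → ℝ}

lemma HasSubgaussianMGF.mono {c c' : ℝ≥0} (h : HasSubgaussianMGF X c μ) (hc : c ≤ c') :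
    HasSubgaussianMGF X c' μ where
  integrable_exp_mul := h.integrable_exp_mul
  mgf_le t := (h.mgf_le t).trans (by gcongr)

lemma hasSubgaussianMGF_of_abs_le_of_integral_eq_zero [IsProbabilityMeasure μ] {b : ℝ≥0}
    (hm : AEMeasurable X μ) (hb : ∀ᵐ ω ∂μ, |X ω| ≤ b) (hc : μ[X] = 0) :
    HasSubgaussianMGF X (b ^ 2) μ := by
  convert hasSubgaussianMGF_of_mem_Icc_of_integral_eq_zero hm
    (hb.mono fun ω hω => abs_le.1 hω) hc using 2
  ext
  simp [← two_mul]

lemma HasSubgaussianMGF.measureReal_abs_ge_le [IsFiniteMeasure μ] {c : ℝ≥0}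
    (h : HasSubgaussianMGF X c μ) {ε : ℝ} (hε : 0 ≤ ε) :
    μ.real {ω | ε ≤ |X ω|} ≤ 2 * exp (-ε ^ 2 / (2 * c)) :=
  calc μ.real {ω | ε ≤ |X ω|} ≤ μ.real ({ω | ε ≤ X ω} ∪ {ω | ε ≤ (-X) ω}) :=
        measureReal_mono fun ω (hω : ε ≤ |X ω|) => le_abs.1 hω
    _ ≤ μ.real {ω | ε ≤ X ω} + μ.real {ω | ε ≤ (-X) ω} := measureReal_union_le _ _
    _ ≤ 2 * exp (-ε ^ 2 / (2 * c)) := by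
        linarith [h.measure_ge_le hε, h.neg.measure_ge_le hε]

lemma measureReal_abs_sum_ge_le_of_iIndepFun [IsProbabilityMeasure μ] {ι : Type*}
    {Y : ι → Ω → ℝ} (h_indep : iIndepFun Y μ) (hm : ∀ i, AEMeasurable (Y i) μ)
    {c : ι → ℝ≥0} (hb : ∀ i, ∀ᵐ ω ∂μ, |Y i ω| ≤ c i) (hc : ∀ i, μ[Y i] = 0)
    {s : Finset ι} {v : ℝ≥0} (hv : ∑ i ∈ s, c i ^ 2 ≤ v) {ε : ℝ} (hε : 0 ≤ ε) :
    μ.real {ω | ε ≤ |∑ i ∈ s, Y i ω|} ≤ 2 * exp (-ε ^ 2 / (2 * v)) :=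
  ((HasSubgaussianMGF.sum_of_iIndepFun h_indep fun i _ =>
    hasSubgaussianMGF_of_abs_le_of_integral_eq_zero (hm i) (hb i) (hc i)).mono hv)
    |>.measureReal_abs_ge_le hε

end ProbabilityTheory

namespace MeasureTheory

variable {Ω : Type*} [MeasurableSpace Ω] {μ : Measure Ω}

lemma integral_comp_eq_sum_measureReal_preimage [IsFiniteMeasure μ] {S : Type*} [Fintype S]
    [MeasurableSpace S] [MeasurableSingletonClass S] {Z : Ω → S} (hZ : Measurable Z)
    (g : S → ℝ) : ∫ ω, g (Z ω) ∂μ = ∑ x, μ.real (Z ⁻¹' {x}) * g x := by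
  rw [← integral_map hZ.aemeasurable (measurable_of_finite g).aestronglyMeasurable,
    integral_fintype Integrable.of_finite]
  simp [map_measureReal_apply hZ (measurableSet_singleton _)]

lemma ofReal_one_sub_card_mul_le_measure [IsProbabilityMeasure μ] {ι : Type*} (I : Finset ι)
    (E : ι → Set Ω) {p : ℝ} (hE : ∀ i ∈ I, μ.real (E i) ≤ p) {G : Set Ω}
    (hG : ∀ ω, (∀ i ∈ I, ω ∉ E i) → ω ∈ G) :
    ENNReal.ofReal (1 - #I * p) ≤ μ G := by
  have hcover : Set.univ ⊆ G ∪ ⋃ i ∈ I, E i := fun ω _ => by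
    by_cases h : ∀ i ∈ I, ω ∉ E i
    · exact Or.inl (hG ω h)
    · push Not at h
      obtain ⟨i, hi, hω⟩ := h
      exact Or.inr (Set.mem_biUnion hi hω)
  have hprob := calc 1 = μ.real Set.univ := probReal_univ.symm
    _ ≤ μ.real (G ∪ ⋃ i ∈ I, E i) := measureReal_mono hcover
    _ ≤ μ.real G + ∑ i ∈ I, μ.real (E i) :=
        (measureReal_union_le _ _).trans (by gcongr; exact measureReal_biUnion_finset_le _ _)
    _ ≤ μ.real G + #I * p := by
        gcongr
        simpa using sum_le_card_nsmul I _ p hE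
  refine ENNReal.ofReal_le_of_le_toReal ?_
  rw [← measureReal_def]
  linarith

end MeasureTheory

lemma sum_range_inv_sqrt_le {b : ℝ} (hb₀ : 0 < b) (hb₁ : b ≤ 1) (K : ℕ) :
    ∑ ℓ ∈ range K, (√(1 + b * ℓ))⁻¹ ≤ 3 / b * √(1 + b * K) := by
  induction K with
  | zero => simp; positivity
  | succ n ih =>
    rw [sum_range_succ]
    have hx : 1 ≤ 1 + b * n := by nlinarith [n.cast_nonneg (α := ℝ)]
    set u := √(1 + b * n)
    set v := √(1 + b * (n + 1 : ℕ))
    have hu : 1 ≤ u := Real.one_le_sqrt.2 hx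
    have hu2 : u ^ 2 = 1 + b * n := Real.sq_sqrt (by linarith)
    have hv2 : v ^ 2 = 1 + b * (n + 1 : ℕ) := Real.sq_sqrt (by push_cast; linarith)
    have hv : 0 ≤ v := Real.sqrt_nonneg _
    -- `v² - u² = b ≤ u²` gives `u ≤ v ≤ 2u`, hence `b = (v - u)(v + u) ≤ 3u(v - u)`
    have hstep : u⁻¹ ≤ 3 / b * (v - u) := by
      push_cast at hv2
      have huv : u ≤ v := by nlinarith
      have hv2u : v ≤ 2 * u := by nlinarith
      rw [inv_le_iff_one_le_mul₀ (by linarith), div_mul_eq_mul_div, div_mul_eq_mul_div,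
        le_div_iff₀ hb₀]
      nlinarith
    linarith

namespace VRQ

noncomputable def pathWeight (γ : ℝ) (ℓ j : ℕ) : ℝ :=
  stepSize γ j * ∏ i ∈ Icc (j + 1) ℓ, (1 - stepSize γ i)

section StepSize

variable {γ : ℝ}

lemma stepSize_pos (hγ : γ ≤ 1) (k : ℕ) : 0 < stepSize γ k := by
  unfold stepSize
  have : 0 ≤ (1 - γ) * k := mul_nonneg (by linarith) k.cast_nonneg
  positivity

lemma stepSize_le_one (hγ : γ ≤ 1) (k : ℕ) : stepSize γ k ≤ 1 := by
  unfold stepSize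
  rw [div_le_one (by nlinarith [k.cast_nonneg (α := ℝ)])]
  nlinarith [k.cast_nonneg (α := ℝ)]

lemma stepSize_mul_one_sub_stepSize_succ_le (hγ₀ : 0 ≤ γ) (hγ₁ : γ ≤ 1) (k : ℕ) :
    stepSize γ k * (1 - stepSize γ (k + 1)) ≤ stepSize γ (k + 1) := by
  have hk : (0 : ℝ) ≤ (1 - γ) * k := mul_nonneg (by linarith) k.cast_nonneg
  unfold stepSize
  rw [one_sub_div (by push_cast; nlinarith), div_mul_div_comm, one_mul,
    div_le_div_iff₀ (by push_cast; nlinarith) (by push_cast; nlinarith)]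
  push_cast
  nlinarith

lemma sqrt_stepSize (γ : ℝ) (k : ℕ) : √(stepSize γ k) = (√(1 + (1 - γ) * k))⁻¹ := by
  rw [stepSize, one_div, Real.sqrt_inv]

lemma pathWeight_self (γ : ℝ) (ℓ : ℕ) : pathWeight γ ℓ ℓ = stepSize γ ℓ := by
  simp [pathWeight]

lemma pathWeight_succ_of_le {ℓ j : ℕ} (h : j ≤ ℓ) :
    pathWeight γ (ℓ + 1) j = (1 - stepSize γ (ℓ + 1)) * pathWeight γ ℓ j := by
  rw [pathWeight, pathWeight, prod_Icc_succ_top (by omega)]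
  ring

lemma pathWeight_nonneg (hγ : γ ≤ 1) (ℓ j : ℕ) : 0 ≤ pathWeight γ ℓ j :=
  mul_nonneg (stepSize_pos hγ j).le <| prod_nonneg fun i _ => by linarith [stepSize_le_one hγ i]

lemma pathWeight_le_stepSize (hγ₀ : 0 ≤ γ) (hγ₁ : γ ≤ 1) {ℓ j : ℕ} (hj : j ≤ ℓ) :
    pathWeight γ ℓ j ≤ stepSize γ ℓ := by
  induction ℓ with
  | zero =>
    obtain rfl : j = 0 := by omega
    exact (pathWeight_self γ 0).le
  | succ n ih =>
    rcases hj.lt_or_eq with hj | rfl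
    · calc pathWeight γ (n + 1) j = (1 - stepSize γ (n + 1)) * pathWeight γ n j :=
            pathWeight_succ_of_le (by omega)
        _ ≤ (1 - stepSize γ (n + 1)) * stepSize γ n := by
            gcongr
            · linarith [stepSize_le_one hγ₁ (n + 1)]
            · exact ih (by omega)
        _ ≤ stepSize γ (n + 1) := by
            rw [mul_comm]
            exact stepSize_mul_one_sub_stepSize_succ_le hγ₀ hγ₁ n
    · exact (pathWeight_self γ _).le

lemma sum_pathWeight_le_one (hγ : γ ≤ 1) (ℓ : ℕ) : ∑ j ∈ Icc 1 ℓ, pathWeight γ ℓ j ≤ 1 := by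
  induction ℓ with
  | zero => simp
  | succ n ih =>
    rw [sum_Icc_succ_top (by omega), pathWeight_self,
      sum_congr rfl fun j hj => pathWeight_succ_of_le (mem_Icc.1 hj).2, ← mul_sum]
    have := stepSize_le_one hγ (n + 1)
    nlinarith

lemma sum_pathWeight_sq_le_stepSize (hγ₀ : 0 ≤ γ) (hγ₁ : γ ≤ 1) (ℓ : ℕ) :
    ∑ j ∈ Icc 1 ℓ, pathWeight γ ℓ j ^ 2 ≤ stepSize γ ℓ :=
  calc ∑ j ∈ Icc 1 ℓ, pathWeight γ ℓ j ^ 2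
      ≤ ∑ j ∈ Icc 1 ℓ, stepSize γ ℓ * pathWeight γ ℓ j := by
        refine sum_le_sum fun j hj => ?_
        rw [sq]
        exact mul_le_mul_of_nonneg_right
          (pathWeight_le_stepSize hγ₀ hγ₁ (mem_Icc.1 hj).2) (pathWeight_nonneg hγ₁ ℓ j)
    _ ≤ stepSize γ ℓ := by
        rw [← mul_sum]
        exact mul_le_of_le_one_right (stepSize_pos hγ₁ ℓ).le (sum_pathWeight_le_one hγ₁ ℓ)

lemma two_mul_sum_div_add_le (hγ₀ : 0 ≤ γ) (hγ₁ : γ < 1) {R : ℝ} (hR : 0 ≤ R) {K : ℕ}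
    {n : ℕ → ℝ} (hn : ∀ ℓ ≤ K, n (ℓ + 1) ≤ R * √(stepSize γ ℓ)) :
    2 * (∑ ℓ ∈ Icc 1 K, n ℓ) / (1 + (1 - γ) * K) + n (K + 1) ≤
      7 * R / (1 - γ) * √(stepSize γ K) := by
  have hb : 0 < 1 - γ := by linarith
  rw [sqrt_stepSize]
  set q := √(1 + (1 - γ) * K)
  have hq2 : q ^ 2 = 1 + (1 - γ) * K := Real.sq_sqrt (by nlinarith [K.cast_nonneg (α := ℝ)])
  have hsum : ∑ ℓ ∈ Icc 1 K, n ℓ ≤ R * (3 / (1 - γ) * q) :=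
    calc ∑ ℓ ∈ Icc 1 K, n ℓ = ∑ ℓ ∈ range K, n (ℓ + 1) := by
          rw [range_eq_Ico, sum_Ico_add' n, zero_add, Ico_add_one_right_eq_Icc]
      _ ≤ ∑ ℓ ∈ range K, R * (√(1 + (1 - γ) * ℓ))⁻¹ :=
          sum_le_sum fun ℓ hℓ => (hn ℓ (mem_range.1 hℓ).le).trans_eq (by rw [sqrt_stepSize])
      _ ≤ R * (3 / (1 - γ) * q) := by
          rw [← mul_sum]
          exact mul_le_mul_of_nonneg_left (sum_range_inv_sqrt_le hb (by linarith) K) hR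
  have hfirst : 2 * (∑ ℓ ∈ Icc 1 K, n ℓ) / (1 + (1 - γ) * K) ≤ 6 * R / (1 - γ) * q⁻¹ := by
    rw [← hq2, div_le_iff₀ (by positivity)]
    calc 2 * ∑ ℓ ∈ Icc 1 K, n ℓ ≤ 2 * (R * (3 / (1 - γ) * q)) := by gcongr
      _ = 6 * R / (1 - γ) * q⁻¹ * q ^ 2 := by field_simp; ring
  have hlast : n (K + 1) ≤ R / (1 - γ) * q⁻¹ := by
    refine (hn K le_rfl).trans ?_
    rw [sqrt_stepSize]
    gcongr
    exact le_div_self hR hb (by linarith)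
  calc _ ≤ 6 * R / (1 - γ) * q⁻¹ + R / (1 - γ) * q⁻¹ := add_le_add hfirst hlast
    _ = 7 * R / (1 - γ) * q⁻¹ := by ring

end StepSize

lemma auxPath_succ_eq_sum {S A : Type} (γ : ℝ) (W : ℕ → S → A → ℝ) (t : ℕ) (s : S) (a : A) :
    auxPath γ W (t + 1) s a = ∑ j ∈ Icc 1 t, pathWeight γ t j * W j s a := by
  induction t with
  | zero => simp [auxPath]
  | succ n ih =>
    rw [auxPath, if_neg n.succ_ne_zero, ih, sum_Icc_succ_top (by omega), pathWeight_self,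
      mul_sum]
    congr 1
    exact sum_congr rfl fun j hj => by
      rw [pathWeight_succ_of_le (mem_Icc.1 hj).2, mul_assoc]

section MDP

variable {S A : Type} [Fintype S] [Fintype A]

lemma IsSample.integral_comp {Ω : Type} [MeasurableSpace Ω] [MeasurableSpace S]
    [MeasurableSingletonClass S] {μ : Measure Ω} [IsFiniteMeasure μ] {M : MDP S A}
    {X : Ω → S → A → S} (hX : IsSample μ M X) (s : S) (a : A) (g : S → ℝ) :
    ∫ ω, g (X ω s a) ∂μ = ∑ x, M.P s a x * g x := by
  rw [integral_comp_eq_sum_measureReal_preimage (hX.1 s a)]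
  refine sum_congr rfl fun x _ => ?_
  rw [measureReal_def, show (fun ω => X ω s a) ⁻¹' {x} = {ω | X ω s a = x} from rfl, hX.2,
    ENNReal.toReal_ofReal (M.P_nonneg s a x)]

lemma measureReal_abs_auxPath_ge_le [MeasurableSpace S] [MeasurableSingletonClass S]
    {Ω : Type} [MeasurableSpace Ω] {μ : Measure Ω} [IsProbabilityMeasure μ] {M : MDP S A}
    {X : ℕ → Ω → S → A → S} (hX : ∀ t, IsSample μ M (X t))
    (hind : iIndepFun (fun p : ℕ × S × A => fun ω => X p.1 ω p.2.1 p.2.2) μ)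
    {f : S → A → S → ℝ} {b : ℝ} (hb : 0 < b) (hfb : ∀ s a x, |f s a x| ≤ b)
    (hf : ∀ s a, ∑ x, M.P s a x * f s a x = 0) {γ : ℝ} (hγ₀ : 0 ≤ γ) (hγ₁ : γ ≤ 1)
    {L : ℝ} (hL : 0 ≤ L) (ℓ : ℕ) (s : S) (a : A) :
    μ.real {ω | b * √(2 * L) * √(stepSize γ ℓ) ≤
        |auxPath γ (fun t s a => f s a (X t ω s a)) (ℓ + 1) s a|} ≤ 2 * exp (-L) := by
  set w := pathWeight γ ℓ
  have hw (j : ℕ) : 0 ≤ w j := pathWeight_nonneg hγ₁ ℓ j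
  have hstep := stepSize_pos hγ₁ ℓ
  have hv : 0 ≤ b ^ 2 * stepSize γ ℓ := by positivity
  have hindep : iIndepFun (fun j ω => w j * f s a (X j ω s a)) μ :=
    (hind.precomp (g := fun j : ℕ => (j, s, a)) fun _ _ h => (Prod.ext_iff.1 h).1).comp
      (fun j (x : S) => w j * f s a x) fun _ => measurable_of_finite _
  have hbound (j : ℕ) (ω : Ω) : |w j * f s a (X j ω s a)| ≤ (w j * b).toNNReal := by
    rw [Real.coe_toNNReal _ (by positivity [hw j]), abs_mul, abs_of_nonneg (hw j)]
    exact mul_le_mul_of_nonneg_left (hfb s a _) (hw j)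
  have hmean (j : ℕ) : μ[fun ω => w j * f s a (X j ω s a)] = 0 := by
    rw [(hX j).integral_comp s a (fun x => w j * f s a x)]
    simp only [mul_left_comm _ (w j), ← mul_sum, hf, mul_zero]
  have hvar : ∑ j ∈ Icc 1 ℓ, (w j * b).toNNReal ^ 2 ≤ (b ^ 2 * stepSize γ ℓ).toNNReal := by
    rw [← NNReal.coe_le_coe]
    push_cast [Real.coe_toNNReal _ (mul_nonneg (hw _) hb.le), Real.coe_toNNReal _ hv]
    simp only [mul_pow, ← sum_mul]
    rw [mul_comm]
    exact mul_le_mul_of_nonneg_left (sum_pathWeight_sq_le_stepSize hγ₀ hγ₁ ℓ) (by positivity)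
  simp only [auxPath_succ_eq_sum]
  refine (measureReal_abs_sum_ge_le_of_iIndepFun hindep
    (fun j => (measurable_of_finite (fun x : S => w j * f s a x)).comp_aemeasurable
      ((hX j).1 s a).aemeasurable)
    (fun j => ae_of_all _ (hbound j)) hmean hvar (by positivity)).trans_eq ?_
  rw [Real.coe_toNNReal _ hv, mul_pow, mul_pow, Real.sq_sqrt (by positivity),
    Real.sq_sqrt hstep.le]
  field_simp

lemma ofReal_le_measure_forall_abs_auxPath_lt [MeasurableSpace S] [MeasurableSingletonClass S]
    {Ω : Type} [MeasurableSpace Ω] {μ : Measure Ω} [IsProbabilityMeasure μ] {M : MDP S A}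
    {X : ℕ → Ω → S → A → S} (hX : ∀ t, IsSample μ M (X t))
    (hind : iIndepFun (fun p : ℕ × S × A => fun ω => X p.1 ω p.2.1 p.2.2) μ)
    {f : S → A → S → ℝ} {b : ℝ} (hb : 0 < b) (hfb : ∀ s a x, |f s a x| ≤ b)
    (hf : ∀ s a, ∑ x, M.P s a x * f s a x = 0) {γ : ℝ} (hγ₀ : 0 ≤ γ) (hγ₁ : γ ≤ 1)
    {L : ℝ} (hL : 0 ≤ L) (K : ℕ) :
    ENNReal.ofReal (1 - K * Fintype.card (S × A) * (2 * exp (-L))) ≤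
      μ {ω | ∀ ℓ ∈ Icc 1 K, ∀ s a, |auxPath γ (fun t s a => f s a (X t ω s a)) (ℓ + 1) s a| <
        b * √(2 * L) * √(stepSize γ ℓ)} := by
  let E : ℕ × S × A → Set Ω := fun p => {ω | b * √(2 * L) * √(stepSize γ p.1) ≤
    |auxPath γ (fun t s a => f s a (X t ω s a)) (p.1 + 1) p.2.1 p.2.2|}
  have hE : ∀ p ∈ Icc 1 K ×ˢ (univ : Finset (S × A)), μ.real (E p) ≤ 2 * exp (-L) := by
    rintro ⟨ℓ, s, a⟩ -
    exact measureReal_abs_auxPath_ge_le hX hind hb hfb hf hγ₀ hγ₁ hL ℓ s a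
  calc ENNReal.ofReal (1 - K * Fintype.card (S × A) * (2 * exp (-L)))
      = ENNReal.ofReal (1 - #(Icc 1 K ×ˢ (univ : Finset (S × A))) * (2 * exp (-L))) := by simp
    _ ≤ _ := by
      refine ofReal_one_sub_card_mul_le_measure _ E hE fun ω hω => ?_
      exact fun ℓ hℓ s a => not_le.1 (hω (ℓ, s, a) (mem_product.2 ⟨hℓ, mem_univ _⟩))

variable [Nonempty A]

noncomputable def diffNoise (M : MDP S A) (γ : ℝ) (θ θ' : S → A → ℝ) (s : S) (a : A) (x : S) :
    ℝ :=
  γ * (∑ y, M.P s a y * (vmax θ y - vmax θ' y) - (vmax θ x - vmax θ' x))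

lemma bellman_sub_sub_empBellman_sub (M : MDP S A) (γ : ℝ) (X : S → A → S)
    (θ θ' : S → A → ℝ) (s : S) (a : A) :
    bellman M γ θ s a - bellman M γ θ' s a - (empBellman M γ X θ s a - empBellman M γ X θ' s a) =
      diffNoise M γ θ θ' s a (X s a) := by
  simp only [bellman, empBellman, diffNoise, mul_sub, sum_sub_distrib]
  ring

lemma sum_P_mul_diffNoise (M : MDP S A) (γ : ℝ) (θ θ' : S → A → ℝ) (s : S) (a : A) :
    ∑ x, M.P s a x * diffNoise M γ θ θ' s a x = 0 := by
  simp only [diffNoise, mul_left_comm _ γ, ← mul_sum, mul_sub, sum_sub_distrib, ← sum_mul,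
    M.P_sum_one, one_mul, sub_self]

variable [Nonempty S]

lemma abs_le_supNorm (θ : S → A → ℝ) (s : S) (a : A) : |θ s a| ≤ supNorm θ :=
  le_sup' (fun p : S × A => |θ p.1 p.2|) (mem_univ (s, a))

lemma supNorm_le {θ : S → A → ℝ} {x : ℝ} (h : ∀ s a, |θ s a| ≤ x) : supNorm θ ≤ x :=
  sup'_le _ _ fun p _ => h p.1 p.2

lemma vmax_le_vmax_add_supNorm_sub (θ θ' : S → A → ℝ) (x : S) :
    vmax θ x ≤ vmax θ' x + supNorm (fun s a => θ s a - θ' s a) :=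
  sup'_le _ _ fun a _ => by
    have h₁ := le_sup' (θ' x) (mem_univ a)
    have h₂ := (le_abs_self _).trans (abs_le_supNorm (fun s a => θ s a - θ' s a) x a)
    simp only [vmax] at *
    linarith

lemma abs_vmax_sub_vmax_le (θ θ' : S → A → ℝ) (x : S) :
    |vmax θ x - vmax θ' x| ≤ supNorm (fun s a => θ s a - θ' s a) := by
  have hsymm : supNorm (fun s a => θ' s a - θ s a) = supNorm (fun s a => θ s a - θ' s a) := by
    simp only [supNorm, abs_sub_comm]
  rw [abs_sub_le_iff]
  constructor
  · linarith [vmax_le_vmax_add_supNorm_sub θ θ' x]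
  · linarith [vmax_le_vmax_add_supNorm_sub θ' θ x]

lemma abs_diffNoise_le (M : MDP S A) {γ : ℝ} (hγ₀ : 0 ≤ γ) (hγ₁ : γ ≤ 1) (θ θ' : S → A → ℝ)
    (s : S) (a : A) (x : S) :
    |diffNoise M γ θ θ' s a x| ≤ 2 * supNorm (fun s a => θ s a - θ' s a) := by
  set N := supNorm (fun s a => θ s a - θ' s a)
  have hmean : |∑ y, M.P s a y * (vmax θ y - vmax θ' y)| ≤ N :=
    calc |∑ y, M.P s a y * (vmax θ y - vmax θ' y)| ≤ ∑ y, M.P s a y * N :=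
          (abs_sum_le_sum_abs _ _).trans <| sum_le_sum fun y _ => by
            rw [abs_mul, abs_of_nonneg (M.P_nonneg s a y)]
            exact mul_le_mul_of_nonneg_left (abs_vmax_sub_vmax_le θ θ' y) (M.P_nonneg s a y)
      _ = N := by rw [← sum_mul, M.P_sum_one, one_mul]
  rw [diffNoise, abs_mul, abs_of_nonneg hγ₀]
  refine (mul_le_of_le_one_left (abs_nonneg _) hγ₁).trans ?_
  linarith [(abs_sub _ _).trans (add_le_add hmean (abs_vmax_sub_vmax_le θ θ' x))]

lemma two_mul_sum_supNorm_auxPath_div_add_le {γ : ℝ} (hγ₀ : 0 ≤ γ) (hγ₁ : γ < 1) {R : ℝ}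
    (hR : 0 ≤ R) {K : ℕ} {W : ℕ → S → A → ℝ}
    (hW : ∀ ℓ ∈ Icc 1 K, ∀ s a, |auxPath γ W (ℓ + 1) s a| ≤ R * √(stepSize γ ℓ)) :
    2 * (∑ ℓ ∈ Icc 1 K, supNorm (auxPath γ W ℓ)) / (1 + (1 - γ) * K) +
        supNorm (auxPath γ W (K + 1)) ≤ 7 * R / (1 - γ) * √(stepSize γ K) := by
  refine two_mul_sum_div_add_le hγ₀ hγ₁ hR fun ℓ hℓ => supNorm_le fun s a => ?_
  rcases ℓ.eq_zero_or_pos with rfl | hℓ₀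
  · simp only [auxPath, if_pos, abs_zero]
    positivity
  · exact hW ℓ (mem_Icc.2 ⟨hℓ₀, hℓ⟩) s a

end MDP

/-- Lemma 2: high-probability bound on the noise process `{path'_t}`. -/
theorem stmt10 :
    ∃ c : ℝ, 0 < c ∧
      ∀ (S A : Type) [Fintype S] [Fintype A] [Nonempty S] [Nonempty A]
        [MeasurableSpace S] [MeasurableSingletonClass S]
        (M : MDP S A) (γ : ℝ), 0 < γ → γ < 1 →
        ∀ θstar : S → A → ℝ, bellman M γ θstar = θstar →
        ∀ δ : ℝ, 0 < δ → δ < 1 → ∀ Mep : ℕ, 1 ≤ Mep → ∀ K : ℕ, 1 ≤ K →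
        ∀ B : ℝ, 0 < B →
        ∀ θbar : S → A → ℝ, supNorm (fun s a => θbar s a - θstar s a) ≤ B →
        ∀ (Ω : Type) [MeasurableSpace Ω] (μ : Measure Ω) [IsProbabilityMeasure μ]
          (X : ℕ → Ω → S → A → S),
          (∀ t, IsSample μ M (X t)) →
          iIndepFun
            (fun p : ℕ × S × A => fun ω => X p.1 ω p.2.1 p.2.2) μ →
        ∀ Vp : Ω → ℕ → S → A → ℝ,
          (∀ ω t s a, Vp ω t s a =
            (bellman M γ θbar s a - bellman M γ θstar s a) -
              (empBellman M γ (X t ω) θbar s a - empBellman M γ (X t ω) θstar s a)) →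
        ENNReal.ofReal (1 - δ / (3 * Mep)) ≤
          μ {ω |
            2 * (∑ ℓ ∈ Finset.Icc 1 K, supNorm (auxPath γ (Vp ω) ℓ)) /
                (1 + (1 - γ) * K) +
              supNorm (auxPath γ (Vp ω) (K + 1)) ≤
            c * B / (1 - γ) *
              Real.sqrt (2 * Real.log ((8 : ℝ) * Mep *
                  (Fintype.card S * Fintype.card A) * K / δ) /
                (1 + (1 - γ) * K))} := by
  refine ⟨14, by norm_num, ?_⟩
  intro S A _ _ _ _ _ _ M γ hγ₀ hγ₁ θstar _ δ hδ₀ hδ₁ Mep hMep K hK B hB θbar hθ Ω _ μ _ X hX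
    hind Vp hVp
  set L := log ((8 : ℝ) * Mep * (Fintype.card S * Fintype.card A) * K / δ)
  have hN : (1 : ℝ) ≤ Mep * (Fintype.card S * Fintype.card A) * K := by
    exact_mod_cast Nat.one_le_iff_ne_zero.2 (by positivity)
  have hL : 0 ≤ L := log_nonneg <| by rw [le_div_iff₀ hδ₀]; linarith
  have hVp' (ω : Ω) : Vp ω = fun t s a => diffNoise M γ θbar θstar s a (X t ω s a) := by
    ext t s a
    rw [hVp, bellman_sub_sub_empBellman_sub]
  have hgood := ofReal_le_measure_forall_abs_auxPath_lt hX hind (by positivity : 0 < 2 * B)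
    (fun s a x => (abs_diffNoise_le M hγ₀.le hγ₁.le θbar θstar s a x).trans (by linarith))
    (sum_P_mul_diffNoise M γ θbar θstar) hγ₀.le hγ₁.le hL K
  simp only [hVp']
  refine (ENNReal.ofReal_le_ofReal ?_).trans (hgood.trans (measure_mono fun ω hω => ?_))
  · rw [Fintype.card_prod, exp_neg, exp_log (by positivity)]
    push_cast
    rw [show (K : ℝ) * (Fintype.card S * Fintype.card A) *
        (2 * (8 * Mep * (Fintype.card S * Fintype.card A) * K / δ)⁻¹) = δ / (4 * Mep) by
      field_simp; ring]
    gcongr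
    norm_num
  · refine (two_mul_sum_supNorm_auxPath_div_add_le hγ₀.le hγ₁ (by positivity)
      fun ℓ hℓ s a => (hω ℓ hℓ s a).le).trans_eq ?_
    rw [← mul_one_div (2 * L), ← stepSize, Real.sqrt_mul (by positivity : 0 ≤ 2 * L)]
    ring

end VRQ
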